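/- Let T be a tree of order n ≥ 4 with diameter exactly 3 (a double star). Then γ_tc(M(T)) = 2n − 4. -/

import Mathlib

open SimpleGraph

/-- The middle graph `M(G)`: vertices are `V(G) ⊕ E(G)`; an edge-vertex is adjacent to
another edge-vertex iff the edges are distinct and share an endpoint, and a vertex is
adjacent to an edge iff it is incident to it. -/
def middleGraph {V : Type*} (G : SimpleGraph V) : SimpleGraph (V ⊕ G.edgeSet) where
  Adj x y :=
    match x, y with
    | Sum.inl _, Sum.inl _ => False
    | Sum.inl v, Sum.inr e => v ∈ (e : Sym2 V)
    | Sum.inr e, Sum.inl v => v ∈ (e : Sym2 V)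
    | Sum.inr e, Sum.inr f => e ≠ f ∧ ∃ v, v ∈ (e : Sym2 V) ∧ v ∈ (f : Sym2 V)
  symm := by
    refine ⟨?_⟩
    rintro (v|e) (w|f) h
    · exact h
    · exact h
    · exact h
    · exact ⟨h.1.symm, h.2.imp fun v hv => ⟨hv.2, hv.1⟩⟩
  loopless := by
    refine ⟨?_⟩
    rintro (v|e) h
    · exact h
    · exact h.1 rfl

/-- `D` is a total dominating set of `G`: every vertex has a neighbour in `D`. -/
def IsTotalDomSet {V : Type*} (G : SimpleGraph V) (D : Set V) : Prop :=
  ∀ v : V, ∃ u ∈ D, G.Adj v u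

/-- `D` is a total outer-connected dominating set of `G`: it is total dominating and
the subgraph induced on the complement of `D` is connected. -/
def IsTOCDomSet {V : Type*} (G : SimpleGraph V) (D : Set V) : Prop :=
  IsTotalDomSet G D ∧ (G.induce Dᶜ).Connected

/-- The total domination number `γₜ(G)`. -/
noncomputable def totalDomNum {V : Type*} (G : SimpleGraph V) : ℕ :=
  sInf {k | ∃ D : Set V, IsTotalDomSet G D ∧ D.ncard = k}

/-- The total outer-connected domination number `γ_tc(G)`. -/
noncomputable def tocDomNum {V : Type*} (G : SimpleGraph V) : ℕ :=
  sInf {k | ∃ D : Set V, IsTOCDomSet G D ∧ D.ncard = k}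

/-- The set of leaves (vertices of degree 1) of `G`. -/
def leafSet {V : Type*} (G : SimpleGraph V) : Set V :=
  {v | ∃ u, G.neighborSet v = {u}}

/-- The wheel graph with hub `none` and rim cycle on `Fin n`. -/
def wheelGraph (n : ℕ) : SimpleGraph (Option (Fin n)) where
  Adj x y :=
    match x, y with
    | none, none => False
    | none, some _ => True
    | some _, none => True
    | some i, some j => (SimpleGraph.cycleGraph n).Adj i j
  symm := by
    refine ⟨?_⟩
    rintro (_|i) (_|j) h
    · exact h
    · exact h
    · exact h
    · exact (SimpleGraph.cycleGraph n).symm.symm _ _ h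
  loopless := by
    refine ⟨?_⟩
    rintro (_|i) h
    · exact h
    · exact (SimpleGraph.cycleGraph n).loopless.irrefl i h

/-- The corona `G ∘ K₁`: to each vertex `a` of `G` (copy `Sum.inl a`) a pendant
vertex `Sum.inr a` is attached. -/
def corona {V : Type*} (G : SimpleGraph V) : SimpleGraph (V ⊕ V) where
  Adj x y :=
    match x, y with
    | Sum.inl a, Sum.inl b => G.Adj a b
    | Sum.inl a, Sum.inr b => a = b
    | Sum.inr a, Sum.inl b => a = b
    | Sum.inr _, Sum.inr _ => False
  symm := by
    refine ⟨?_⟩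
    rintro (a|a) (b|b) h
    · exact G.symm.symm _ _ h
    · exact h.symm
    · exact h.symm
    · exact h
  loopless := by
    refine ⟨?_⟩
    rintro (a|a) h
    · exact G.loopless.irrefl a h
    · exact h

/-- The 2-corona `G ∘ P₂`: to each vertex `a` of `G` (copy `Sum.inl a`) a path
`Sum.inl a — Sum.inr (Sum.inl a) — Sum.inr (Sum.inr a)` of length 2 is attached. -/
def corona2 {V : Type*} (G : SimpleGraph V) : SimpleGraph (V ⊕ V ⊕ V) where
  Adj x y :=
    match x, y with
    | Sum.inl a, Sum.inl b => G.Adj a b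
    | Sum.inl a, Sum.inr (Sum.inl b) => a = b
    | Sum.inr (Sum.inl a), Sum.inl b => a = b
    | Sum.inr (Sum.inl a), Sum.inr (Sum.inr b) => a = b
    | Sum.inr (Sum.inr a), Sum.inr (Sum.inl b) => a = b
    | _, _ => False
  symm := by
    refine ⟨?_⟩
    rintro (a|a|a) (b|b|b) h <;> first | exact G.symm.symm _ _ h | exact h.symm | exact h
  loopless := by
    refine ⟨?_⟩
    rintro (a|a|a) h
    · exact G.loopless.irrefl a h
    · exact h
    · exact h

/-- The spider `S_{1,n,n}`: hub `none`, middle vertices `some (.inl i)`,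
leaves `some (.inr i)`; the star `K_{1,n}` with every edge subdivided once. -/
def spiderGraph (n : ℕ) : SimpleGraph (Option (Fin n ⊕ Fin n)) where
  Adj x y :=
    match x, y with
    | none, some (Sum.inl _) => True
    | some (Sum.inl _), none => True
    | some (Sum.inl i), some (Sum.inr j) => i = j
    | some (Sum.inr i), some (Sum.inl j) => i = j
    | _, _ => False
  symm := by
    refine ⟨?_⟩
    rintro (_|i|i) (_|j|j) h <;> first | exact h.symm | exact h
  loopless := by
    refine ⟨?_⟩
    rintro (_|i|i) h <;> exact h

/-- The friendship graph `Fₙ`: `n` triangles sharing the common vertex `none`. -/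
def friendshipGraph (n : ℕ) : SimpleGraph (Option (Fin n × Fin 2)) where
  Adj x y :=
    match x, y with
    | none, some _ => True
    | some _, none => True
    | some (i, a), some (j, b) => i = j ∧ a ≠ b
    | none, none => False
  symm := by
    refine ⟨?_⟩
    rintro (_|⟨i,a⟩) (_|⟨j,b⟩) h <;> first | exact ⟨h.1.symm, h.2.symm⟩ | exact h
  loopless := by
    refine ⟨?_⟩
    rintro (_|⟨i,a⟩) h
    · exact h
    · exact h.2 rfl

/-! A tree of diameter `3` is a double star: for a diametral path `u c₁ c₂ v`, every vertex
other than `c₁, c₂` lies at distance `3` from `u` or from `v` and is therefore a leaf.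
In `M(T)`, which has `2n - 1` vertices, a total dominating set `D` must contain the pendant
edge of every leaf. So if a leaf of `T` survives in `M(T) - D` it is an isolated vertex there,
and connectivity forces `M(T) - D` to be that single vertex; otherwise `M(T) - D` lies inside
the triangle `{c₁, c₂, c₁c₂}`. Hence `|D| ≥ 2n - 4`, and the complement of the triangle
attains this. -/

lemma Sym2.eq_mk_of_forall_mem {α : Type*} {e : Sym2 α} (he : ¬e.IsDiag) {a b : α}
    (h : ∀ x ∈ e, x = a ∨ x = b) : e = s(a, b) := by
  induction e using Sym2.ind with | _ x y => ?_
  rw [Sym2.mk_isDiag_iff] at he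
  rcases h x (Sym2.mem_mk_left x y) with rfl | rfl <;>
    rcases h y (Sym2.mem_mk_right x y) with rfl | rfl
  exacts [(he rfl).elim, rfl, Sym2.eq_swap, (he rfl).elim]

namespace SimpleGraph

variable {V : Type*} {G T : SimpleGraph V}

lemma eq_of_adj_of_mem_leafSet {a b c : V} (ha : a ∈ leafSet G) (hb : G.Adj a b)
    (hc : G.Adj a c) : b = c := by
  obtain ⟨u, hu⟩ := ha
  have hb' : b ∈ G.neighborSet a := hb
  have hc' : c ∈ G.neighborSet a := hc
  rw [hu] at hb' hc'
  exact hb'.trans hc'.symm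

lemma edge_eq_of_mem_leafSet {w : V} (hw : w ∈ leafSet G) {e f : Sym2 V}
    (he : e ∈ G.edgeSet) (hf : f ∈ G.edgeSet) (hwe : w ∈ e) (hwf : w ∈ f) : e = f := by
  obtain ⟨b, rfl⟩ := Sym2.mem_iff_exists.mp hwe
  obtain ⟨c, rfl⟩ := Sym2.mem_iff_exists.mp hwf
  rw [eq_of_adj_of_mem_leafSet hw (G.mem_edgeSet.mp he) (G.mem_edgeSet.mp hf)]

lemma IsTree.eq_of_adj_of_dist_add_one_eq (hT : T.IsTree) {a d z z' : V}
    (hz : T.Adj a z) (hz' : T.Adj a z')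
    (hdz : T.dist z d + 1 = T.dist a d) (hdz' : T.dist z' d + 1 = T.dist a d) : z = z' := by
  obtain ⟨q, -, hq⟩ := hT.connected.exists_path_of_dist z d
  obtain ⟨q', -, hq'⟩ := hT.connected.exists_path_of_dist z' d
  have hp : (Walk.cons hz q).IsPath := Walk.isPath_of_length_eq_dist _ (by simp [hq, hdz])
  have hp' : (Walk.cons hz' q').IsPath := Walk.isPath_of_length_eq_dist _ (by simp [hq', hdz'])
  have hpp' : (⟨_, hp⟩ : T.Path a d) = ⟨_, hp'⟩ :=
    (hT.isAcyclic.subsingleton_path a d).elim _ _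
  simpa using congrArg (fun p : T.Path a d => p.1.snd) hpp'

lemma IsTree.mem_leafSet_of_forall_dist_le (hT : T.IsTree) {a d : V} (had : a ≠ d)
    (hfar : ∀ y, T.dist y d ≤ T.dist a d) : a ∈ leafSet T := by
  have : Nontrivial V := nontrivial_of_ne a d had
  obtain ⟨z, hz⟩ := hT.connected.preconnected.exists_adj_of_nontrivial a
  have hcloser {y : V} (hy : T.Adj a y) : T.dist y d + 1 = T.dist a d := by
    have hstep := hT.dist_eq_dist_add_one_of_adj d hy
    rw [dist_comm (u := d), dist_comm (u := d)] at hstep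
    have := hfar y
    omega
  refine ⟨z, Set.ext fun y => ⟨fun hy => ?_, fun hy => hy ▸ hz⟩⟩
  exact hT.eq_of_adj_of_dist_add_one_eq hy hz (hcloser hy) (hcloser hz)

lemma IsTree.exists_doubleStar_of_diam_eq_three (hT : T.IsTree) (hdiam : T.diam = 3) :
    ∃ c₁ c₂ x y, T.Adj c₁ c₂ ∧ T.Adj c₁ x ∧ x ≠ c₂ ∧ T.Adj c₂ y ∧ y ≠ c₁ ∧
      ∀ w, w ≠ c₁ → w ≠ c₂ → w ∈ leafSet T := by
  have : Nonempty V := hT.connected.nonempty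
  have hle (a b : V) : T.dist a b ≤ 3 :=
    hdiam ▸ dist_le_diam (ediam_ne_top_of_diam_ne_zero (by omega))
  have hleaf {a b : V} (h : T.dist a b = 3) : a ∈ leafSet T :=
    hT.mem_leafSet_of_forall_dist_le (by rintro rfl; simp at h) fun y => h ▸ hle y b
  obtain ⟨u, v, huv⟩ := T.exists_dist_eq_diam
  rw [hdiam] at huv
  obtain ⟨p, hp, hlen⟩ := hT.connected.exists_path_of_dist u v
  rw [huv] at hlen
  rcases p with _ | ⟨h₁, _ | ⟨h₂, _ | ⟨h₃, _ | ⟨_, _⟩⟩⟩⟩ <;> simp at hlen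
  rename_i c₁ c₂
  have hnodup := hp.support_nodup
  simp only [Walk.support_cons, Walk.support_nil, List.nodup_cons, List.mem_cons,
    List.not_mem_nil, not_or, List.nodup_nil] at hnodup
  refine ⟨c₁, c₂, u, v, h₂, h₁.symm, by tauto, h₃, by tauto, fun w hw₁ hw₂ => ?_⟩
  -- Along `u c₁ c₂ v` the distance from `w` changes by exactly one per step; it is `≠ 0` at
  -- `c₁, c₂` and `≠ 1` at the leaves `u, v`, so being `≤ 3` it equals `3` at `u` or at `v`.
  have hu : T.dist w u ≠ 1 := fun h =>
    hw₁ (eq_of_adj_of_mem_leafSet (hleaf huv) (dist_eq_one_iff_adj.mp h).symm h₁)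
  have hv : T.dist w v ≠ 1 := fun h => hw₂ (eq_of_adj_of_mem_leafSet
    (hleaf (dist_comm.trans huv)) (dist_eq_one_iff_adj.mp h).symm h₃.symm)
  have hc₁ : T.dist w c₁ ≠ 0 := fun h => hw₁ (hT.connected.dist_eq_zero_iff.mp h)
  have hc₂ : T.dist w c₂ ≠ 0 := fun h => hw₂ (hT.connected.dist_eq_zero_iff.mp h)
  have := hT.dist_eq_dist_add_one_of_adj w h₁
  have := hT.dist_eq_dist_add_one_of_adj w h₂
  have := hT.dist_eq_dist_add_one_of_adj w h₃
  have := hle w u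
  have := hle w v
  rcases (by omega : T.dist w u = 3 ∨ T.dist w v = 3) with h | h
  exacts [hleaf h, hleaf h]

lemma IsTotalDomSet.inr_mem_of_mem_leafSet {D : Set (V ⊕ G.edgeSet)}
    (hD : IsTotalDomSet (middleGraph G) D) {w : V} (hw : w ∈ leafSet G) {e : G.edgeSet}
    (he : w ∈ (e : Sym2 V)) : Sum.inr e ∈ D := by
  obtain ⟨_ | f, hf, hwf⟩ := hD (Sum.inl w)
  · exact hwf.elim
  rwa [Subtype.ext (edge_eq_of_mem_leafSet hw e.2 f.2 he hwf)]

lemma IsTOCDomSet.compl_subset_singleton_of_mem_leafSet {D : Set (V ⊕ G.edgeSet)}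
    (hD : IsTOCDomSet (middleGraph G) D) {w : V} (hw : w ∈ leafSet G) (hwD : Sum.inl w ∉ D) :
    Dᶜ ⊆ {Sum.inl w} := by
  -- In `M(G) - D` the vertex `w` has no neighbour left: its only edge lies in `D`.
  have hsub : Subsingleton (Dᶜ : Set (V ⊕ G.edgeSet)) := by
    by_contra hnt
    rw [not_subsingleton_iff_nontrivial] at hnt
    obtain ⟨⟨_ | e, he⟩, hadj⟩ := hD.2.preconnected.exists_adj_of_nontrivial ⟨Sum.inl w, hwD⟩
    · exact hadj
    · exact he (hD.1.inr_mem_of_mem_leafSet hw hadj)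
  exact fun x hx => Set.mem_singleton_iff.mpr
    (congrArg Subtype.val (Subsingleton.elim (⟨x, hx⟩ : (Dᶜ : Set _)) ⟨_, hwD⟩))

section EdgeTriangle

variable {c₁ c₂ : V} (h : G.Adj c₁ c₂)

def edgeTriangle : Set (V ⊕ G.edgeSet) :=
  {Sum.inl c₁, Sum.inl c₂, Sum.inr ⟨s(c₁, c₂), G.mem_edgeSet.mpr h⟩}

@[simp]
lemma inl_mem_edgeTriangle {w : V} : Sum.inl w ∈ edgeTriangle h ↔ w = c₁ ∨ w = c₂ := by
  simp [edgeTriangle]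

@[simp]
lemma inr_mem_edgeTriangle {e : G.edgeSet} :
    Sum.inr e ∈ edgeTriangle h ↔ (e : Sym2 V) = s(c₁, c₂) := by
  simp [edgeTriangle, Subtype.ext_iff]

lemma ncard_edgeTriangle : (edgeTriangle h).ncard = 3 := by
  rw [Set.ncard_eq_three]
  exact ⟨_, _, _, by simp [h.ne], by simp, by simp, rfl⟩

lemma connected_induce_edgeTriangle :
    ((middleGraph G).induce (edgeTriangle h)).Connected := by
  have hmem : Sum.inr ⟨s(c₁, c₂), G.mem_edgeSet.mpr h⟩ ∈ edgeTriangle h := by simp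
  have hreach (x : edgeTriangle h) :
      ((middleGraph G).induce (edgeTriangle h)).Reachable x ⟨_, hmem⟩ := by
    obtain ⟨x, hx⟩ := x
    simp only [edgeTriangle, Set.mem_insert_iff, Set.mem_singleton_iff] at hx
    rcases hx with rfl | rfl | rfl
    · exact Adj.reachable (Sym2.mem_mk_left c₁ c₂)
    · exact Adj.reachable (Sym2.mem_mk_right c₁ c₂)
    · rfl
  have : Nonempty (edgeTriangle h) := ⟨⟨_, hmem⟩⟩
  exact ⟨fun x y => (hreach x).trans (hreach y).symm⟩

lemma isTOCDomSet_compl_edgeTriangle {x y : V} (hx : G.Adj c₁ x) (hx₂ : x ≠ c₂)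
    (hy : G.Adj c₂ y) (hy₁ : y ≠ c₁) (hG : ∀ v, ∃ w, G.Adj v w) :
    IsTOCDomSet (middleGraph G) (edgeTriangle h)ᶜ := by
  have hx' : s(c₁, x) ≠ s(c₁, c₂) := by simp [hx₂, hx.ne']
  refine ⟨?_, by rw [compl_compl]; exact connected_induce_edgeTriangle h⟩
  rintro (w | ⟨e, he⟩)
  · by_cases hw₁ : w = c₁
    · subst hw₁
      exact ⟨Sum.inr ⟨s(w, x), hx⟩, by simp [hx'], Sym2.mem_mk_left _ _⟩
    by_cases hw₂ : w = c₂
    · subst hw₂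
      exact ⟨Sum.inr ⟨s(w, y), hy⟩, by simp [hy₁, h.ne'], Sym2.mem_mk_left _ _⟩
    obtain ⟨z, hz⟩ := hG w
    exact ⟨Sum.inr ⟨s(w, z), hz⟩, by simp [hw₁, hw₂], Sym2.mem_mk_left _ _⟩
  · by_cases he' : e = s(c₁, c₂)
    · subst he'
      refine ⟨Sum.inr ⟨s(c₁, x), hx⟩, by simp [hx'], ?_, c₁, Sym2.mem_mk_left _ _,
        Sym2.mem_mk_left _ _⟩
      simpa [Subtype.ext_iff] using hx'.symm
    obtain ⟨a, ha, ha₁, ha₂⟩ : ∃ a ∈ e, a ≠ c₁ ∧ a ≠ c₂ := by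
      by_contra! hall
      exact he' (Sym2.eq_mk_of_forall_mem (G.not_isDiag_of_mem_edgeSet he)
        fun a ha => or_iff_not_imp_left.mpr (hall a ha))
    exact ⟨Sum.inl a, by simp [ha₁, ha₂], ha⟩

lemma IsTOCDomSet.ncard_compl_le_ncard_edgeTriangle
    (hleaf : ∀ w, w ≠ c₁ → w ≠ c₂ → w ∈ leafSet G) {D : Set (V ⊕ G.edgeSet)}
    (hD : IsTOCDomSet (middleGraph G) D) : Dᶜ.ncard ≤ (edgeTriangle h).ncard := by
  by_cases hout : ∃ w, w ≠ c₁ ∧ w ≠ c₂ ∧ Sum.inl w ∉ D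
  · obtain ⟨w, hw₁, hw₂, hwD⟩ := hout
    calc Dᶜ.ncard ≤ ({Sum.inl w} : Set (V ⊕ G.edgeSet)).ncard :=
          Set.ncard_le_ncard (hD.compl_subset_singleton_of_mem_leafSet (hleaf w hw₁ hw₂) hwD)
      _ ≤ (edgeTriangle h).ncard := by simp [ncard_edgeTriangle]
  push Not at hout
  have hsub : Dᶜ ⊆ edgeTriangle h := by
    rintro (w | e) hx
    · by_contra hw
      rw [inl_mem_edgeTriangle, not_or] at hw
      exact hx (hout w hw.1 hw.2)
    · rw [inr_mem_edgeTriangle]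
      refine Sym2.eq_mk_of_forall_mem (G.not_isDiag_of_mem_edgeSet e.2) fun a ha => ?_
      by_contra hne
      rw [not_or] at hne
      exact hx (hD.1.inr_mem_of_mem_leafSet (hleaf a hne.1 hne.2) ha)
  exact Set.ncard_le_ncard hsub (Set.finite_of_ncard_ne_zero (by simp [ncard_edgeTriangle]))

end EdgeTriangle

lemma tocDomNum_eq_of_forall_ncard_compl_le {W : Type*} [Finite W] {H : SimpleGraph W}
    {K : Set W} (hK : IsTOCDomSet H Kᶜ) (hmax : ∀ D, IsTOCDomSet H D → Dᶜ.ncard ≤ K.ncard) :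
    tocDomNum H = Nat.card W - K.ncard := by
  have hmem : Nat.card W - K.ncard ∈ {k | ∃ D, IsTOCDomSet H D ∧ D.ncard = k} :=
    ⟨Kᶜ, hK, Set.ncard_compl K⟩
  refine le_antisymm (Nat.sInf_le hmem) (le_csInf ⟨_, hmem⟩ ?_)
  rintro _ ⟨D, hD, rfl⟩
  have := Set.ncard_add_ncard_compl D
  have := hmax D hD
  omega

end SimpleGraph

theorem stmt11_general {V : Type*} [Fintype V] (T : SimpleGraph V) (hT : T.IsTree)
    (hdiam : T.diam = 3) :
    tocDomNum (middleGraph T) = 2 * Fintype.card V - 4 := by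
  obtain ⟨c₁, c₂, x, y, h, hx, hx₂, hy, hy₁, hleaf⟩ := hT.exists_doubleStar_of_diam_eq_three hdiam
  have : Nontrivial V := nontrivial_of_ne c₁ c₂ h.ne
  have hG : ∀ v, ∃ w, T.Adj v w := hT.connected.preconnected.exists_adj_of_nontrivial
  have hcard : Nat.card T.edgeSet + 1 = Nat.card V := (isTree_iff_connected_and_card.mp hT).2
  rw [tocDomNum_eq_of_forall_ncard_compl_le (isTOCDomSet_compl_edgeTriangle h hx hx₂ hy hy₁ hG)
      fun D hD => hD.ncard_compl_le_ncard_edgeTriangle h hleaf,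
    ncard_edgeTriangle, Nat.card_sum, ← Nat.card_eq_fintype_card]
  omega

theorem stmt11 {V : Type*} [Fintype V] (T : SimpleGraph V) (hT : T.IsTree)
    (hn : 4 ≤ Fintype.card V) (hdiam : T.diam = 3) :
    tocDomNum (middleGraph T) = 2 * Fintype.card V - 4 :=
  stmt11_general T hT hdiam
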